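/- Let X be a compact metric space, f : X → X a homeomorphism, and A : X → GL(d,ℝ) continuous, generating the cocycle 𝒜ⁿ_x. Suppose z ∈ X has dense two-sided orbit {fⁿz : n ∈ ℤ}, and there is a constant c such that ‖𝒜ⁿ_z‖ ≤ c and ‖(𝒜ⁿ_z)^{−1}‖ ≤ c for all n ∈ ℤ. Then ‖𝒜ⁿ_x‖ ≤ c² and ‖(𝒜ⁿ_x)^{−1}‖ ≤ c² for all x ∈ X and n ∈ ℤ. -/

import Mathlib

open scoped MatrixGroups Matrix.Norms.L2Operator

/-- The `GL(d,ℝ)`-valued cocycle generated by `A` over a bijection `f`: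
`𝒜⁰_x = I` and `𝒜ⁿ⁺¹_x = A(fⁿx) · 𝒜ⁿ_x`. -/
def cocN {X : Type*} {d : ℕ} (f : Equiv.Perm X) (A : X → GL (Fin d) ℝ) :
    X → ℕ → GL (Fin d) ℝ
  | _, 0 => 1
  | x, n + 1 => A ((f ^ n) x) * cocN f A x n

/-- The extension of the cocycle to `ℤ`: `𝒜⁻ⁿ_x = (𝒜ⁿ_{f⁻ⁿx})⁻¹`. -/
def cocZ {X : Type*} {d : ℕ} (f : Equiv.Perm X) (A : X → GL (Fin d) ℝ)
    (x : X) (n : ℤ) : GL (Fin d) ℝ :=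
  if 0 ≤ n then cocN f A x n.toNat else (cocN f A ((f ^ n) x) (-n).toNat)⁻¹

/-!
By the cocycle identity, `𝒜ⁿ_{fᵐz} = 𝒜ⁿ⁺ᵐ_z (𝒜ᵐ_z)⁻¹`, so along the orbit of `z` both
`𝒜ⁿ` and its inverse have norm at most `c²`. For fixed `n` the points where these two bounds
hold form a closed set, because `x ↦ 𝒜ⁿ_x` is continuous into the topological group
`GL(d,ℝ)`, where inversion is continuous; it contains the dense orbit of `z`, hence is all of `X`.
-/

section CocycleIdentity

variable {X : Type*} {d : ℕ} (f : Equiv.Perm X) (A : X → GL (Fin d) ℝ)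

lemma cocN_succ_eq_mul (x : X) (n : ℕ) : cocN f A x (n + 1) = cocN f A (f x) n * A x := by
  induction n generalizing x with
  | zero => simp [cocN]
  | succ n ih =>
    rw [cocN, ih, cocN, ← mul_assoc, pow_succ, Equiv.Perm.mul_apply]

lemma cocZ_natCast (x : X) (n : ℕ) : cocZ f A x n = cocN f A x n := by
  simp [cocZ]

lemma cocZ_neg_natCast (x : X) (n : ℕ) :
    cocZ f A x (-n) = (cocN f A ((f ^ (-n : ℤ)) x) n)⁻¹ := by
  rcases n with _ | n
  · simp [cocZ, cocN]
  · rw [cocZ, if_neg (by omega), neg_neg, Int.toNat_natCast]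

lemma cocZ_add_one (x : X) (n : ℤ) : cocZ f A x (n + 1) = A ((f ^ n) x) * cocZ f A x n := by
  rcases n with n | n
  · rw [Int.ofNat_eq_natCast, ← Nat.cast_succ, cocZ_natCast, cocZ_natCast, cocN, zpow_natCast]
  · have hshift : f ((f ^ (-((n + 1 : ℕ) : ℤ))) x) = (f ^ (-n : ℤ)) x := by
      rw [← Equiv.Perm.mul_apply, ← zpow_one_add]
      congr 2
      omega
    rw [show Int.negSucc n + 1 = -n by omega, show Int.negSucc n = -((n + 1 : ℕ) : ℤ) by omega,
      cocZ_neg_natCast, cocZ_neg_natCast, cocN_succ_eq_mul, hshift, mul_inv_rev,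
      mul_inv_cancel_left]

lemma cocZ_add (x : X) (n m : ℤ) :
    cocZ f A x (n + m) = cocZ f A ((f ^ m) x) n * cocZ f A x m := by
  induction n using Int.induction_on with
  | zero => simp [cocZ, cocN]
  | succ n ih =>
    rw [add_right_comm, cocZ_add_one, ih, cocZ_add_one, mul_assoc, zpow_add, Equiv.Perm.mul_apply]
  | pred n ih =>
    have step := cocZ_add_one f A x (-n - 1 + m)
    have step' := cocZ_add_one f A ((f ^ m) x) (-n - 1)
    rw [show -(n : ℤ) - 1 + m + 1 = -n + m by ring, ih] at step
    rw [sub_add_cancel, ← Equiv.Perm.mul_apply, ← zpow_add] at step'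
    rw [step', mul_assoc] at step
    exact (mul_left_cancel step).symm

lemma cocZ_zpow_apply (z : X) (m n : ℤ) :
    cocZ f A ((f ^ m) z) n = cocZ f A z (n + m) * (cocZ f A z m)⁻¹ :=
  eq_mul_inv_of_mul_eq (cocZ_add f A z n m).symm

end CocycleIdentity

section Continuity

variable {X : Type*} [TopologicalSpace X] {d : ℕ} {f : Equiv.Perm X} {A : X → GL (Fin d) ℝ}

lemma continuous_perm_zpow (hf : Continuous f) (hf' : Continuous f.symm) (n : ℤ) :
    Continuous ⇑(f ^ n) := by
  induction n using Int.induction_on with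
  | zero => exact continuous_id
  | succ n ih => rw [zpow_add_one, Equiv.Perm.coe_mul]; exact ih.comp hf
  | pred n ih => rw [zpow_sub_one, Equiv.Perm.coe_mul]; exact ih.comp hf'

lemma continuous_cocN (hf : Continuous f) (hA : Continuous A) (n : ℕ) :
    Continuous fun x => cocN f A x n := by
  induction n with
  | zero => exact continuous_const
  | succ n ih =>
    simp only [cocN_succ_eq_mul]
    exact (ih.comp hf).mul hA

lemma continuous_cocZ (hf : Continuous f) (hf' : Continuous f.symm) (hA : Continuous A) (n : ℤ) :
    Continuous fun x => cocZ f A x n := by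
  obtain ⟨n, rfl | rfl⟩ := Int.eq_nat_or_neg n
  · simpa only [cocZ_natCast] using continuous_cocN hf hA n
  · simp only [cocZ_neg_natCast]
    exact ((continuous_cocN hf hA n).comp (continuous_perm_zpow hf hf' _)).inv

end Continuity

lemma Units.norm_val_mul_inv_le {R : Type*} [NormedRing R] {u v : Rˣ} {c : ℝ}
    (hu : ‖(u : R)‖ ≤ c) (hv : ‖((v⁻¹ : Rˣ) : R)‖ ≤ c) : ‖((u * v⁻¹ : Rˣ) : R)‖ ≤ c ^ 2 :=
  calc ‖((u * v⁻¹ : Rˣ) : R)‖ ≤ ‖(u : R)‖ * ‖((v⁻¹ : Rˣ) : R)‖ := norm_mul_le _ _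
    _ ≤ c * c := mul_le_mul hu hv (norm_nonneg _) ((norm_nonneg _).trans hu)
    _ = c ^ 2 := (sq c).symm

theorem stmt_12_general {X : Type*} [MetricSpace X] (d : ℕ)
    (f : Equiv.Perm X) (hf : Continuous f) (hf' : Continuous f.symm)
    (A : X → GL (Fin d) ℝ)
    (hA : Continuous fun x => (A x : Matrix (Fin d) (Fin d) ℝ))
    (z : X) (hdense : Dense (Set.range fun n : ℤ => (f ^ n) z))
    (c : ℝ)
    (hz : ∀ n : ℤ, ‖(cocZ f A z n : Matrix (Fin d) (Fin d) ℝ)‖ ≤ c ∧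
      ‖(((cocZ f A z n)⁻¹ : GL (Fin d) ℝ) : Matrix (Fin d) (Fin d) ℝ)‖ ≤ c) :
    ∀ x : X, ∀ n : ℤ, ‖(cocZ f A x n : Matrix (Fin d) (Fin d) ℝ)‖ ≤ c ^ 2 ∧
      ‖(((cocZ f A x n)⁻¹ : GL (Fin d) ℝ) : Matrix (Fin d) (Fin d) ℝ)‖ ≤ c ^ 2 := by
  intro x n
  have hcont : Continuous fun y => cocZ f A y n :=
    continuous_cocZ hf hf' (Units.isOpenEmbedding_val.continuous_iff.mpr hA) n
  have hclosed : IsClosed {y | ‖(cocZ f A y n : Matrix (Fin d) (Fin d) ℝ)‖ ≤ c ^ 2 ∧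
      ‖(((cocZ f A y n)⁻¹ : GL (Fin d) ℝ) : Matrix (Fin d) (Fin d) ℝ)‖ ≤ c ^ 2} :=
    (isClosed_le (Units.continuous_val.comp hcont).norm continuous_const).inter
      (isClosed_le (Units.continuous_val.comp hcont.inv).norm continuous_const)
  refine hclosed.closure_subset_iff.mpr ?_ (hdense x)
  rintro _ ⟨m, rfl⟩
  rw [Set.mem_ofPred_eq, cocZ_zpow_apply, mul_inv_rev, inv_inv]
  exact ⟨Units.norm_val_mul_inv_le (hz _).1 (hz m).2, Units.norm_val_mul_inv_le (hz m).1 (hz _).2⟩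

/-- If a continuous `GL(d,ℝ)`-valued cocycle over a homeomorphism of a compact metric
space is bounded by `c` along a dense two-sided orbit, then it is bounded by `c²`
everywhere. -/
theorem stmt_12 {X : Type*} [MetricSpace X] [CompactSpace X] (d : ℕ)
    (f : Equiv.Perm X) (hf : Continuous f) (hf' : Continuous f.symm)
    (A : X → GL (Fin d) ℝ)
    (hA : Continuous fun x => (A x : Matrix (Fin d) (Fin d) ℝ))
    (z : X) (hdense : Dense (Set.range fun n : ℤ => (f ^ n) z))
    (c : ℝ)
    (hz : ∀ n : ℤ, ‖(cocZ f A z n : Matrix (Fin d) (Fin d) ℝ)‖ ≤ c ∧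
      ‖(((cocZ f A z n)⁻¹ : GL (Fin d) ℝ) : Matrix (Fin d) (Fin d) ℝ)‖ ≤ c) :
    ∀ x : X, ∀ n : ℤ, ‖(cocZ f A x n : Matrix (Fin d) (Fin d) ℝ)‖ ≤ c ^ 2 ∧
      ‖(((cocZ f A x n)⁻¹ : GL (Fin d) ℝ) : Matrix (Fin d) (Fin d) ℝ)‖ ≤ c ^ 2 :=
  stmt_12_general d f hf hf' A hA z hdense c hz
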